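/- arXiv:2406.12609 — 12 statements merged into one kernel-verified Lean document; each statement's English description precedes it below -/
import Mathlib

section
/- Let A be a clopen subset of 2^ω × 2^ω whose projection onto the first coordinate is all of 2^ω, and let M be a closed subset of 2^ω × 2^ω such that for every x ∈ 2^ω the vertical section M|_x = {y : (x,y) ∈ M} is nowhere dense in 2^ω. Then there exists a clopen set B ⊆ A \ M whose projection onto the first coordinate is all of 2^ω. -/
open Set Filter Topology MeasureTheory

abbrev Cantor : Type := ℕ → Bool

/-- Coordinatewise addition mod 2 on the Cantor space. -/
def cadd (s t : Cantor) : Cantor := fun n => xor (s n) (t n)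

/-- Translate of a set: `t ⊕ P`. -/
def tAdd (t : Cantor) (P : Set Cantor) : Set Cantor := (cadd t) '' P

/-- Vertical section of a subset of the plane `Cantor × Cantor`. -/
def sect (A : Set (Cantor × Cantor)) (x : Cantor) : Set Cantor := {y | (x, y) ∈ A}

/-- A set is Fσ if it is a countable union of closed sets. -/
def IsFSigma {Z : Type*} [TopologicalSpace Z] (s : Set Z) : Prop :=
  ∃ f : ℕ → Set Z, (∀ n, IsClosed (f n)) ∧ s = ⋃ n, f n

/-- The Hurewicz covering property for a subset of a topological space. -/
def Hurewicz {Z : Type*} [TopologicalSpace Z] (X : Set Z) : Prop :=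
  ∀ U : ℕ → Set (Set Z), (∀ n, (∀ u ∈ U n, IsOpen u) ∧ X ⊆ ⋃₀ U n) →
    ∃ F : ℕ → Set (Set Z), (∀ n, F n ⊆ U n ∧ (F n).Finite) ∧
      ∀ x ∈ X, ∀ᶠ n in atTop, x ∈ ⋃₀ F n

/-- The Menger covering property for a subset of a topological space. -/
def Menger {Z : Type*} [TopologicalSpace Z] (X : Set Z) : Prop :=
  ∀ U : ℕ → Set (Set Z), (∀ n, (∀ u ∈ U n, IsOpen u) ∧ X ⊆ ⋃₀ U n) →
    ∃ F : ℕ → Set (Set Z), (∀ n, F n ⊆ U n ∧ (F n).Finite) ∧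
      X ⊆ ⋃ n, ⋃₀ F n

/-- λ'-set: every countable set `A` of the ambient space is Gδ relative to `X ∪ A`. -/
def LambdaPrime {Z : Type*} [TopologicalSpace Z] (X : Set Z) : Prop :=
  ∀ A : Set Z, A.Countable → ∃ G : Set Z, IsGδ G ∧ (X ∪ A) ∩ G = A

/-- A set is totally imperfect if it contains no (nonempty) perfect subset. -/
def TotallyImperfect {Z : Type*} [TopologicalSpace Z] (X : Set Z) : Prop :=
  ∀ P : Set Z, P ⊆ X → Perfect P → P = ∅

/-- Perfectly meager in the transitive sense. -/
def PMT (X : Set Cantor) : Prop :=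
  ∀ P : Set Cantor, Perfect P → P.Nonempty →
    ∃ F : Set Cantor, IsSigmaCompact F ∧ X ⊆ F ∧
      ∀ t : Cantor, IsMeagre (Subtype.val ⁻¹' F : Set (tAdd t P))

/-- `μ` is the standard product (Haar) probability measure on the Cantor space. -/
def IsCantorMeasure (μ : Measure Cantor) : Prop :=
  ∀ s : Finset ℕ, ∀ f : ℕ → Bool,
    μ {x : Cantor | ∀ i ∈ s, x i = f i} = (1 / 2 : ENNReal) ^ s.card

/-- cov(N) with respect to a measure μ on the Cantor space. -/
noncomputable def covNull (μ : Measure Cantor) : Cardinal :=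
  sInf { c : Cardinal | ∃ S : Set (Set Cantor), Cardinal.mk S = c ∧
    (∀ A ∈ S, μ A = 0) ∧ ⋃₀ S = univ }

/-- cov(M) : least size of a family of meager sets covering the Cantor space. -/
noncomputable def covMeager : Cardinal :=
  sInf { c : Cardinal | ∃ S : Set (Set Cantor), Cardinal.mk S = c ∧
    (∀ A ∈ S, IsMeagre A) ∧ ⋃₀ S = univ }

/-- The bounding number b: least size of an unbounded family in (ω^ω, ≤*). -/
noncomputable def boundingNumber : Cardinal :=
  sInf { c : Cardinal | ∃ S : Set (ℕ → ℕ), Cardinal.mk S = c ∧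
    ¬ ∃ g : ℕ → ℕ, ∀ f ∈ S, ∀ᶠ n in atTop, f n ≤ g n }

/- Every point of `X` is the image of a clopen piece of `W`; these images are open, so
compactness of `X` selects finitely many pieces, whose union is still clopen. -/
theorem IsOpenMap.exists_isClopen_subset_image_eq_univ {Z X : Type*} [TopologicalSpace Z]
    [TopologicalSpace X] [CompactSpace X] (hZ : TopologicalSpace.IsTopologicalBasis
      {s : Set Z | IsClopen s}) {f : Z → X} (hf : IsOpenMap f) {W : Set Z} (hW : IsOpen W)
    (hWf : f '' W = univ) : ∃ B : Set Z, IsClopen B ∧ B ⊆ W ∧ f '' B = univ := by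
  have hpiece : ∀ x : X, ∃ C : Set Z, IsClopen C ∧ C ⊆ W ∧ x ∈ f '' C := by
    intro x
    obtain ⟨z, hzW, rfl⟩ : x ∈ f '' W := hWf ▸ mem_univ x
    obtain ⟨C, hC, hzC, hCW⟩ := hZ.exists_subset_of_mem_open hzW hW
    exact ⟨C, hC, hCW, mem_image_of_mem f hzC⟩
  choose C hC hCW hxC using hpiece
  obtain ⟨s, hs⟩ := isCompact_univ.elim_finite_subcover (fun x => f '' C x)
    (fun x => hf _ (hC x).isOpen) (fun x _ => mem_iUnion.mpr ⟨x, hxC x⟩)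
  refine ⟨⋃ x ∈ s, C x, isClopen_biUnion_finset fun x _ => hC x,
    iUnion₂_subset fun x _ => hCW x, eq_univ_of_forall fun y => ?_⟩
  simpa only [image_iUnion₂] using hs (mem_univ y)

theorem IsOpen.diff_nonempty_of_isNowhereDense {X : Type*} [TopologicalSpace X] {U s : Set X}
    (hU : IsOpen U) (hne : U.Nonempty) (hs : IsNowhereDense s) : (U \ s).Nonempty :=
  ((interior_eq_empty_iff_dense_compl.mp hs).inter_open_nonempty U hU hne).mono
    (inter_subset_inter_right U (compl_subset_compl.mpr subset_closure))

theorem image_fst_diff_eq_univ {X Y : Type*} [TopologicalSpace X] [TopologicalSpace Y]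
    {A M : Set (X × Y)} (hA : IsOpen A) (hAfst : Prod.fst '' A = univ)
    (hM : ∀ x : X, IsNowhereDense (Prod.mk x ⁻¹' M)) : Prod.fst '' (A \ M) = univ := by
  refine eq_univ_of_forall fun x => ?_
  obtain ⟨⟨x, y⟩, hxy, rfl⟩ : x ∈ Prod.fst '' A := hAfst ▸ mem_univ x
  obtain ⟨y', hy'A, hy'M⟩ :=
    (hA.preimage (Continuous.prodMk_right x)).diff_nonempty_of_isNowhereDense ⟨y, hxy⟩ (hM x)
  exact ⟨(x, y'), ⟨hy'A, hy'M⟩, rfl⟩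

theorem stmt0 (A M : Set (Cantor × Cantor))
    (hA : IsClopen A) (hAproj : Prod.fst '' A = univ)
    (hM : IsClosed M) (hMsect : ∀ x : Cantor, IsNowhereDense (sect M x)) :
    ∃ B : Set (Cantor × Cantor), IsClopen B ∧ B ⊆ A \ M ∧ Prod.fst '' B = univ :=
  isOpenMap_fst.exists_isClopen_subset_image_eq_univ isTopologicalBasis_isClopen
    (hA.isOpen.sdiff hM) (image_fst_diff_eq_univ hA.isOpen hAproj hMsect)
end

section
/- Let (M_n)_{n∈ω} be an increasing sequence of closed subsets of 2^ω × 2^ω such that for every n and every x ∈ 2^ω the vertical section M_n|_x is nowhere dense in 2^ω. Then there exists a compact set D ⊆ 2^ω × 2^ω disjoint from ⋃_n M_n whose projection onto the first coordinate is all of 2^ω. -/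
open Set Filter Topology MeasureTheory

/-!
Shrink clopen sets `Cantor × Cantor ⊇ D₀ ⊇ D₁ ⊇ ⋯` with `Dₙ` disjoint from `Mₙ` and every vertical
section of `Dₙ` nonempty. Inside the open set `Dₙ` a point `(x, y)` off `Mₙ₊₁` exists over every `x`
because `Mₙ₊₁|ₓ` is nowhere dense; a clopen neighbourhood of it avoiding `Mₙ₊₁` projects onto an
open neighbourhood of `x`, and finitely many of these cover the compact first factor. The
intersection `D = ⋂ Dₙ` is compact, misses every `Mₙ`, and has nonempty sections since the
sections of the `Dₙ` are decreasing nonempty compact sets.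
-/

lemma IsOpen.exists_notMem_of_isNowhereDense {X : Type*} [TopologicalSpace X] {s t : Set X}
    (hs : IsOpen s) (hne : s.Nonempty) (ht : IsNowhereDense t) : ∃ y ∈ s, y ∉ t := by
  obtain ⟨y, hys, hyt⟩ := (interior_eq_empty_iff_dense_compl.mp ht).inter_open_nonempty s hs hne
  exact ⟨y, hys, fun h => hyt (subset_closure h)⟩

section Stone

variable {X Y : Type*} [TopologicalSpace X] [CompactSpace X] [T2Space X]
  [TotallyDisconnectedSpace X] [TopologicalSpace Y] [CompactSpace Y] [T2Space Y]
  [TotallyDisconnectedSpace Y]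

lemma exists_isClopen_subset_diff_sections_nonempty {K M : Set (X × Y)} (hK : IsOpen K)
    (hKs : ∀ x, (Prod.mk x ⁻¹' K).Nonempty) (hM : IsClosed M)
    (hMs : ∀ x, IsNowhereDense (Prod.mk x ⁻¹' M)) :
    ∃ K', IsClopen K' ∧ K' ⊆ K \ M ∧ ∀ x, (Prod.mk x ⁻¹' K').Nonempty := by
  have hclopen_over : ∀ x : X, ∃ W : Set (X × Y), IsClopen W ∧ x ∈ Prod.fst '' W ∧ W ⊆ K \ M := by
    intro x
    obtain ⟨y, hyK, hyM⟩ :=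
      (hK.preimage (Continuous.prodMk_right x)).exists_notMem_of_isNowhereDense
        (hKs x) (hMs x)
    obtain ⟨W, hW, hxyW, hWKM⟩ := compact_exists_isClopen_in_isOpen (hK.sdiff hM)
      (show (x, y) ∈ K \ M from ⟨hyK, hyM⟩)
    exact ⟨W, hW, ⟨(x, y), hxyW, rfl⟩, hWKM⟩
  choose W hW hxW hWKM using hclopen_over
  obtain ⟨t, ht⟩ := isCompact_univ.elim_finite_subcover (fun x => Prod.fst '' W x)
    (fun x => isOpenMap_fst _ (hW x).isOpen) fun x _ => mem_iUnion.mpr ⟨x, hxW x⟩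
  refine ⟨⋃ x ∈ t, W x, isClopen_biUnion_finset fun x _ => hW x, iUnion₂_subset fun x _ => hWKM x,
    fun x => ?_⟩
  obtain ⟨x', hx't, ⟨_, y⟩, hxy, rfl⟩ := mem_iUnion₂.mp (ht (mem_univ x))
  exact ⟨y, mem_biUnion hx't hxy⟩

lemma exists_antitone_isClopen_disjoint_sections_nonempty [Nonempty Y] (M : ℕ → Set (X × Y))
    (hM : ∀ n, IsClosed (M n)) (hMs : ∀ n x, IsNowhereDense (Prod.mk x ⁻¹' M n)) :
    ∃ D : ℕ → Set (X × Y), Antitone D ∧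
      ∀ n, IsClopen (D n) ∧ Disjoint (D n) (M n) ∧ ∀ x, (Prod.mk x ⁻¹' D n).Nonempty := by
  have hshrink : ∀ n (K : Set (X × Y)), IsOpen K → (∀ x, (Prod.mk x ⁻¹' K).Nonempty) →
      ∃ K', (IsClopen K' ∧ Disjoint K' (M n) ∧ ∀ x, (Prod.mk x ⁻¹' K').Nonempty) ∧ K' ⊆ K := by
    intro n K hK hKs
    obtain ⟨K', hK', hK'KM, hK's⟩ :=
      exists_isClopen_subset_diff_sections_nonempty hK hKs (hM n) (hMs n)
    exact ⟨K', ⟨hK', disjoint_sdiff_left.mono_left hK'KM, hK's⟩, hK'KM.trans sdiff_subset⟩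
  choose! f hf hfK using hshrink
  let D : ℕ → Set (X × Y) := fun n => Nat.rec (f 0 univ) (fun n K => f (n + 1) K) n
  have hD : ∀ n, IsClopen (D n) ∧ Disjoint (D n) (M n) ∧ ∀ x, (Prod.mk x ⁻¹' D n).Nonempty := by
    intro n
    induction n with
    | zero => exact hf 0 univ isOpen_univ fun _ => univ_nonempty
    | succ n ih => exact hf (n + 1) (D n) ih.1.isOpen ih.2.2
  refine ⟨D, antitone_nat_of_succ_le fun n => ?_, hD⟩
  exact hfK (n + 1) (D n) (hD n).1.isOpen (hD n).2.2

end Stone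

lemma image_fst_iInter_eq_univ {X Y : Type*} [TopologicalSpace X] [TopologicalSpace Y]
    [CompactSpace Y] {D : ℕ → Set (X × Y)} (hD : Antitone D) (hDc : ∀ n, IsClosed (D n))
    (hDs : ∀ n x, (Prod.mk x ⁻¹' D n).Nonempty) : Prod.fst '' ⋂ n, D n = univ := by
  refine eq_univ_of_forall fun x => ?_
  have hclosed n : IsClosed (Prod.mk x ⁻¹' D n) := (hDc n).preimage (Continuous.prodMk_right x)
  obtain ⟨y, hy⟩ := IsCompact.nonempty_iInter_of_sequence_nonempty_isCompact_isClosed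
    (fun n => Prod.mk x ⁻¹' D n) (fun n => preimage_mono (hD n.le_succ)) (hDs · x)
    (hclosed 0).isCompact hclosed
  exact ⟨(x, y), by simpa only [mem_iInter, mem_preimage] using hy, rfl⟩

theorem stmt1_general (M : ℕ → Set (Cantor × Cantor))
    (hcl : ∀ n, IsClosed (M n))
    (hsect : ∀ n, ∀ x : Cantor, IsNowhereDense (sect (M n) x)) :
    ∃ D : Set (Cantor × Cantor), IsCompact D ∧ Disjoint D (⋃ n, M n) ∧
      Prod.fst '' D = univ := by
  obtain ⟨D, hDanti, hD⟩ := exists_antitone_isClopen_disjoint_sections_nonempty M hcl hsect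
  refine ⟨⋂ n, D n, (isClosed_iInter fun n => (hD n).1.isClosed).isCompact, ?_,
    image_fst_iInter_eq_univ hDanti (fun n => (hD n).1.isClosed) fun n => (hD n).2.2⟩
  exact disjoint_iUnion_right.mpr fun n => (hD n).2.1.mono_left (iInter_subset D n)

theorem stmt1 (M : ℕ → Set (Cantor × Cantor))
    (hmono : Monotone M) (hcl : ∀ n, IsClosed (M n))
    (hsect : ∀ n, ∀ x : Cantor, IsNowhereDense (sect (M n) x)) :
    ∃ D : Set (Cantor × Cantor), IsCompact D ∧ Disjoint D (⋃ n, M n) ∧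
      Prod.fst '' D = univ :=
  stmt1_general M hcl hsect
end

section
/- Let (M_n)_{n∈ω} be an increasing sequence of closed subsets of 2^ω × 2^ω such that for every n and every x ∈ 2^ω the vertical section M_n|_x is nowhere dense in 2^ω. Then there exists a σ-compact set D ⊆ 2^ω × 2^ω disjoint from ⋃_n M_n such that for every x ∈ 2^ω the section D|_x is dense in 2^ω. -/
open Set Filter Topology MeasureTheory

/-! The graph of a continuous `g : 2^ω → 2^ω` is compact, so it suffices to find, for every
nonempty open `V`, a continuous `g` with values in `V` whose graph misses every `M n`, and to take
the union of these graphs over a countable basis. Such a `g` is the limit of a sequence of locally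
constant maps `x ↦ (c, ℓ)`, each describing a cylinder `[c↾ℓ]` inside the previous one: as the
section of `M n` over `x` is closed and nowhere dense, some subcylinder avoids it, by the tube lemma
this persists on a neighbourhood of `x`, and compactness of `2^ω` glues these local choices into a
locally constant one. -/

open PiNat

theorem PiNat.exists_cylinder_subset_of_mem_nhds {E : ℕ → Type*} [∀ n, TopologicalSpace (E n)]
    [∀ n, DiscreteTopology (E n)] {x : ∀ n, E n} {s : Set (∀ n, E n)} (hs : s ∈ 𝓝 x) :
    ∃ n, cylinder x n ⊆ s := by
  obtain ⟨_, ⟨z, n, rfl⟩, hxz, hzs⟩ := (isTopologicalBasis_cylinders E).mem_nhds_iff.1 hs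
  exact ⟨n, mem_cylinder_iff_eq.1 hxz ▸ hzs⟩

theorem PiNat.isClosed_cylinder (E : ℕ → Type*) [∀ n, TopologicalSpace (E n)]
    [∀ n, DiscreteTopology (E n)] (x : ∀ n, E n) (n : ℕ) : IsClosed (cylinder x n) :=
  cylinder_eq_pi x n ▸ isClosed_set_pi fun _ _ => isClosed_discrete _

theorem exists_isLocallyConstant_forall_of_eventually {β : Type*} {P : Cantor → β → Prop}
    (h : ∀ x, ∃ b, ∀ᶠ x' in 𝓝 x, P x' b) :
    ∃ f : Cantor → β, IsLocallyConstant f ∧ ∀ x, P x (f x) := by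
  choose b hb using h
  choose k hk using fun x => exists_cylinder_subset_of_mem_nhds (hb x)
  obtain ⟨T, hT⟩ := isCompact_univ.elim_finite_subcover (fun x => cylinder x (k x))
    (fun x => isOpen_cylinder _ x (k x)) fun x _ => mem_iUnion.2 ⟨x, self_mem_cylinder x (k x)⟩
  choose! t htT hmem using fun z => mem_iUnion₂.1 (hT (mem_univ z))
  set K := T.sup k
  -- Truncating at `K` makes the choice of `t` depend only on finitely many coordinates.
  let trunc : Cantor → Cantor := fun x i => if i < K then x i else false
  have htrunc : IsLocallyConstant trunc := by
    refine (IsLocallyConstant.iff_eventually_eq _).2 fun x => ?_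
    filter_upwards [(isOpen_cylinder _ x K).mem_nhds (self_mem_cylinder x K)] with x' hx'
    funext i
    by_cases hi : i < K
    · simp only [trunc, if_pos hi, hx' i hi]
    · simp only [trunc, if_neg hi]
  refine ⟨(b ∘ t) ∘ trunc, htrunc.comp _, fun x => hk _ fun i hi => ?_⟩
  have hiK : i < K := lt_of_lt_of_le hi (Finset.le_sup (htT _))
  simpa only [trunc, if_pos hiK] using hmem (trunc x) i hi

theorem exists_cylinder_subset_eventually_forall_notMem {X : Type*} [TopologicalSpace X]
    {A : Set (X × Cantor)} (hA : IsClosed A) {x : X} (hx : IsNowhereDense {y | (x, y) ∈ A})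
    (c : Cantor) (ℓ : ℕ) :
    ∃ c' m, ℓ < m ∧ cylinder c' m ⊆ cylinder c ℓ ∧
      ∀ᶠ x' in 𝓝 x, ∀ y ∈ cylinder c' m, (x', y) ∉ A := by
  have hsect : IsClosed {y | (x, y) ∈ A} := hA.preimage (Continuous.prodMk_right x)
  have hdense : Dense {y | (x, y) ∈ A}ᶜ :=
    interior_eq_empty_iff_dense_compl.1 (hsect.closure_eq ▸ hx)
  obtain ⟨c', hc'A, hc'⟩ :=
    hdense.exists_mem_open (isOpen_cylinder _ c ℓ) ⟨c, self_mem_cylinder c ℓ⟩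
  obtain ⟨m, hm⟩ := exists_cylinder_subset_of_mem_nhds
    ((hsect.isOpen_compl.inter (isOpen_cylinder _ c ℓ)).mem_nhds ⟨hc'A, hc'⟩)
  have hsub : cylinder c' (max m (ℓ + 1)) ⊆ {y | (x, y) ∈ A}ᶜ ∩ cylinder c ℓ :=
    (cylinder_anti c' (le_max_left _ _)).trans hm
  refine ⟨c', max m (ℓ + 1), by omega, fun y hy => (hsub hy).2, ?_⟩
  exact (isClosed_cylinder _ c' _).isCompact.eventually_forall_of_forall_eventually
    fun y hy => hA.isOpen_compl.mem_nhds (hsub hy).1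

theorem exists_isLocallyConstant_refinement {A : Set (Cantor × Cantor)} (hA : IsClosed A)
    (hsect : ∀ x, IsNowhereDense (sect A x)) {τ : Cantor → Cantor × ℕ}
    (hτ : IsLocallyConstant τ) :
    ∃ τ' : Cantor → Cantor × ℕ, IsLocallyConstant τ' ∧ ∀ x, (τ x).2 < (τ' x).2 ∧
      cylinder (τ' x).1 (τ' x).2 ⊆ cylinder (τ x).1 (τ x).2 ∧
      ∀ y ∈ cylinder (τ' x).1 (τ' x).2, (x, y) ∉ A := by
  refine exists_isLocallyConstant_forall_of_eventually
    (P := fun x (p : Cantor × ℕ) => (τ x).2 < p.2 ∧ cylinder p.1 p.2 ⊆ cylinder (τ x).1 (τ x).2 ∧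
      ∀ y ∈ cylinder p.1 p.2, (x, y) ∉ A) fun x => ?_
  obtain ⟨c, m, hm, hsub, hev⟩ :=
    exists_cylinder_subset_eventually_forall_notMem hA (hsect x) (τ x).1 (τ x).2
  refine ⟨(c, m), ?_⟩
  filter_upwards [hτ.eventually_eq x, hev] with x' hx' hx'A
  rw [hx']
  exact ⟨hm, hsub, hx'A⟩

theorem mem_cylinder_of_nested {c : ℕ → Cantor} {ℓ : ℕ → ℕ} (hℓ : ∀ n, ℓ n < ℓ (n + 1))
    (hc : ∀ n, cylinder (c (n + 1)) (ℓ (n + 1)) ⊆ cylinder (c n) (ℓ n)) (n : ℕ) :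
    (fun i => c (i + 1) i) ∈ cylinder (c n) (ℓ n) := by
  have hanti : Antitone fun n => cylinder (c n) (ℓ n) := antitone_nat_of_succ_le hc
  have hle : ∀ n, n ≤ ℓ n := fun _ => (strictMono_nat_of_lt_succ hℓ).le_apply
  intro i hi
  have hn := hanti (le_max_left n (i + 1)) (self_mem_cylinder _ _)
  have hi1 := hanti (le_max_right n (i + 1)) (self_mem_cylinder _ _)
  exact (hi1 i (hle (i + 1))).symm.trans (hn i hi)

theorem exists_continuous_mem_forall_notMem {M : ℕ → Set (Cantor × Cantor)}
    (hcl : ∀ n, IsClosed (M n)) (hsect : ∀ n x, IsNowhereDense (sect (M n) x))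
    {V : Set Cantor} (hV : IsOpen V) (hne : V.Nonempty) :
    ∃ g : Cantor → Cantor, Continuous g ∧ ∀ x, g x ∈ V ∧ ∀ n, (x, g x) ∉ M n := by
  obtain ⟨z, hz⟩ := hne
  obtain ⟨ℓ, hℓ⟩ := exists_cylinder_subset_of_mem_nhds (hV.mem_nhds hz)
  choose! refine hrefine using fun n (τ : Cantor → Cantor × ℕ) (hτ : IsLocallyConstant τ) =>
    exists_isLocallyConstant_refinement (hcl n) (hsect n) hτ
  let τ : ℕ → Cantor → Cantor × ℕ := fun n => Nat.rec (fun _ => (z, ℓ)) refine n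
  have hτ : ∀ n, IsLocallyConstant (τ n) := by
    intro n
    induction n with
    | zero => exact IsLocallyConstant.const _
    | succ n ih => exact (hrefine n _ ih).1
  have hstep n x := (hrefine n (τ n) (hτ n)).2 x
  have hmem x n := mem_cylinder_of_nested (c := fun n => (τ n x).1) (ℓ := fun n => (τ n x).2)
    (fun n => (hstep n x).1) (fun n => (hstep n x).2.1) n
  refine ⟨fun x i => (τ (i + 1) x).1 i,
    continuous_pi fun i => ((hτ (i + 1)).comp fun p => p.1 i).continuous,
    fun x => ⟨hℓ (hmem x 0), fun n => (hstep n x).2.2 _ (hmem x (n + 1))⟩⟩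

theorem stmt2_general (M : ℕ → Set (Cantor × Cantor))
    (hcl : ∀ n, IsClosed (M n))
    (hsect : ∀ n, ∀ x : Cantor, IsNowhereDense (sect (M n) x)) :
    ∃ D : Set (Cantor × Cantor), IsSigmaCompact D ∧ Disjoint D (⋃ n, M n) ∧
      ∀ x : Cantor, Dense (sect D x) := by
  obtain ⟨B, hBc, hBne, hB⟩ := TopologicalSpace.exists_countable_basis Cantor
  choose! g hg using fun V (hV : V ∈ B) => exists_continuous_mem_forall_notMem hcl hsect
    (hB.isOpen hV) (nonempty_iff_ne_empty.2 (ne_of_mem_of_not_mem hV hBne))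
  refine ⟨⋃ V ∈ B, range fun x => (x, g V x), ?_, ?_, fun x => ?_⟩
  · exact isSigmaCompact_biUnion hBc fun V hV =>
      (isCompact_range (continuous_id.prodMk (hg V hV).1)).isSigmaCompact
  · simp only [disjoint_iUnion_left, disjoint_iUnion_right]
    intro n V hV
    exact disjoint_left.2 fun _ ⟨x, hx⟩ => hx ▸ ((hg V hV).2 x).2 n
  · exact hB.dense_iff.2 fun V hV _ => ⟨g V x, ((hg V hV).2 x).1, mem_biUnion hV ⟨x, rfl⟩⟩

theorem stmt2 (M : ℕ → Set (Cantor × Cantor))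
    (hmono : Monotone M) (hcl : ∀ n, IsClosed (M n))
    (hsect : ∀ n, ∀ x : Cantor, IsNowhereDense (sect (M n) x)) :
    ∃ D : Set (Cantor × Cantor), IsSigmaCompact D ∧ Disjoint D (⋃ n, M n) ∧
      ∀ x : Cantor, Dense (sect D x) :=
  stmt2_general M hcl hsect
end

section
/- Let O be an open subset of 2^ω × 2^ω such that for every x ∈ 2^ω the vertical section O|_x has Lebesgue (Haar) measure 1 in 2^ω. Then for every real number a ∈ (0,1) there exists a compact set K ⊆ O such that for every x ∈ 2^ω the section K|_x has measure greater than 1 − a. -/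
open Set Filter Topology MeasureTheory

section ProdSections

variable {X Y : Type*} [TopologicalSpace X] [TopologicalSpace Y]

theorem exists_isCompact_mem_nhds_prod_subset [LocallyCompactSpace X] {O : Set (X × Y)}
    (hO : IsOpen O) {x : X} {L : Set Y} (hL : IsCompact L) (hLO : L ⊆ Prod.mk x ⁻¹' O) :
    ∃ N ∈ 𝓝 x, IsCompact N ∧ N ×ˢ L ⊆ O := by
  have hnear : ∀ᶠ x' in 𝓝 x, ∀ y ∈ L, (x', y) ∈ O :=
    hL.eventually_forall_of_forall_eventually fun _ hy => hO.mem_nhds (hLO hy)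
  obtain ⟨N, ⟨hNx, hN⟩, hNO⟩ := (compact_basis_nhds x).eventually_iff.1 hnear
  exact ⟨N, hNx, hN, fun p hp => hNO hp.1 p.2 hp.2⟩

/-- Approximate each section from inside by a compact `L x`, thicken `{x} ×ˢ L x` to a compact
box `N x ×ˢ L x ⊆ O`, and take the union of finitely many boxes whose first factors cover `X`. -/
theorem exists_isCompact_subset_forall_lt_measure_preimage_prodMk [CompactSpace X]
    [LocallyCompactSpace X] [MeasurableSpace Y] (μ : Measure Y) [μ.Regular]
    {O : Set (X × Y)} (hO : IsOpen O) {r : ENNReal} (hr : ∀ x, r < μ (Prod.mk x ⁻¹' O)) :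
    ∃ K : Set (X × Y), IsCompact K ∧ K ⊆ O ∧ ∀ x, r < μ (Prod.mk x ⁻¹' K) := by
  have hbox : ∀ x, ∃ L, IsCompact L ∧ r < μ L ∧ ∃ N ∈ 𝓝 x, IsCompact N ∧ N ×ˢ L ⊆ O := by
    intro x
    obtain ⟨L, hLO, hL, hrL⟩ :=
      (hO.preimage (Continuous.prodMk_right x)).exists_lt_isCompact (hr x)
    exact ⟨L, hL, hrL, exists_isCompact_mem_nhds_prod_subset hO hL hLO⟩
  choose L hL hrL N hN hNc hNO using hbox
  obtain ⟨t, -, ht⟩ := isCompact_univ.elim_nhds_subcover N fun x _ => hN x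
  refine ⟨⋃ x ∈ t, N x ×ˢ L x, t.isCompact_biUnion fun x _ => (hNc x).prod (hL x),
    iUnion₂_subset fun x _ => hNO x, fun x' => ?_⟩
  obtain ⟨x, hxt, hx'⟩ := mem_iUnion₂.1 (ht (mem_univ x'))
  exact (hrL x).trans_le (measure_mono fun y hy => mem_iUnion₂.2 ⟨x, hxt, hx', hy⟩)

end ProdSections

theorem stmt3 (μ : Measure Cantor) (hμ : IsCantorMeasure μ)
    (O : Set (Cantor × Cantor)) (hO : IsOpen O)
    (hOsect : ∀ x : Cantor, μ (sect O x) = 1)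
    (a : ℝ) (ha : a ∈ Set.Ioo (0 : ℝ) 1) :
    ∃ K : Set (Cantor × Cantor), IsCompact K ∧ K ⊆ O ∧
      ∀ x : Cantor, μ (sect K x) > ENNReal.ofReal (1 - a) := by
  have : IsProbabilityMeasure μ := ⟨by simpa using hμ ∅ fun _ => false⟩
  have hlt : ENNReal.ofReal (1 - a) < 1 := ENNReal.ofReal_lt_one.2 (by linarith [ha.1])
  exact exists_isCompact_subset_forall_lt_measure_preimage_prodMk μ hO
    fun x => (hOsect x).symm ▸ hlt
end

section
/- Let G be a G_δ subset of 2^ω × 2^ω such that for every x ∈ 2^ω the vertical section G|_x has measure 1 in 2^ω. Then for every real number a ∈ (0,1) there exists a compact set K ⊆ G such that μ(K|_x) > 1 − a for every x ∈ 2^ω. Consequently, there exists a σ-compact set F ⊆ G such that μ(F|_x) = 1 for every x ∈ 2^ω. -/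
open Set Filter Topology MeasureTheory

/-! Write `G = ⋂ Uₙ` with `Uₙ` open. For a single open `U` whose vertical sections all have
measure `> c`, inner regularity and the tube lemma give around each `x` a closed neighbourhood
`t` and a compact `D` of measure `> c` with `t ×ˢ D ⊆ U`; compactness of the first factor leaves
finitely many such rectangles, whose union is a compact `C ⊆ U` with all sections of measure
`> c`. Doing this for every `Uₙ` with errors `δₙ`, `∑ δₙ < ε`, the intersection of the `Cₙ` is a
compact subset of `G` all of whose sections have co-measure `< ε`. -/

open scoped ENNReal

section VerticalSections

variable {X Y : Type*} [TopologicalSpace X] [TopologicalSpace Y] [MeasurableSpace Y]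

theorem IsCompact.measurableSet_preimage_mk [T2Space X] [T2Space Y] [OpensMeasurableSpace Y]
    {K : Set (X × Y)} (hK : IsCompact K) (x : X) : MeasurableSet (Prod.mk x ⁻¹' K) :=
  (hK.isClosed.preimage (Continuous.prodMk_right x)).measurableSet

theorem exists_isCompact_subset_lt_measure_preimage_mk [CompactSpace X] [RegularSpace X]
    {ν : Measure Y} [ν.Regular] {U : Set (X × Y)} (hU : IsOpen U) {c : ℝ≥0∞}
    (hc : ∀ x, c < ν (Prod.mk x ⁻¹' U)) :
    ∃ C ⊆ U, IsCompact C ∧ ∀ x, c < ν (Prod.mk x ⁻¹' C) := by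
  have tube : ∀ x, ∃ t ∈ 𝓝 x, ∃ D, IsClosed t ∧ IsCompact D ∧ t ×ˢ D ⊆ U ∧ c < ν D := by
    intro x
    obtain ⟨D, hDU, hD, hcD⟩ :=
      (hU.preimage (Continuous.prodMk_right x)).exists_lt_isCompact (hc x)
    obtain ⟨u, v, hu, -, hxu, hDv, huv⟩ :=
      generalized_tube_lemma isCompact_singleton hD hU (by simpa [singleton_prod] using hDU)
    obtain ⟨t, ht, htc, htu⟩ := exists_mem_nhds_isClosed_subset (hu.mem_nhds (hxu rfl))
    exact ⟨t, ht, D, htc, hD, (prod_mono htu hDv).trans huv, hcD⟩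
  choose t ht D htc hD htD hcD using tube
  obtain ⟨s, -, hs⟩ := isCompact_univ.elim_nhds_subcover t fun x _ => ht x
  refine ⟨⋃ i ∈ s, t i ×ˢ D i, iUnion₂_subset fun i _ => htD i,
    s.isCompact_biUnion fun i _ => (htc i).isCompact.prod (hD i), fun x => ?_⟩
  obtain ⟨i, hi, hxi⟩ := mem_iUnion₂.1 (hs (mem_univ x))
  exact (hcD i).trans_le (measure_mono fun y hy => mem_iUnion₂.2 ⟨i, hi, hxi, hy⟩)

variable [CompactSpace X] [T2Space X] [T2Space Y] [OpensMeasurableSpace Y]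
  {ν : Measure Y} [IsProbabilityMeasure ν] [ν.Regular] {G : Set (X × Y)}

theorem IsGδ.exists_isCompact_subset_measure_compl_preimage_mk_lt (hG : IsGδ G)
    (hGx : ∀ x, ν (Prod.mk x ⁻¹' G) = 1) {ε : ℝ≥0∞} (hε : ε ≠ 0) :
    ∃ K ⊆ G, IsCompact K ∧ ∀ x, ν (Prod.mk x ⁻¹' K)ᶜ < ε := by
  obtain ⟨U, hU, rfl⟩ := hG.eq_iInter_nat
  obtain ⟨δ, hδ, hδε⟩ := ENNReal.exists_pos_sum_of_countable hε ℕ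
  have approx : ∀ n, ∃ C ⊆ U n, IsCompact C ∧ ∀ x, ν (Prod.mk x ⁻¹' C)ᶜ < δ n := by
    intro n
    have hUx : ∀ x, 1 - (δ n : ℝ≥0∞) < ν (Prod.mk x ⁻¹' U n) := fun x =>
      (ENNReal.sub_lt_self ENNReal.one_ne_top one_ne_zero (by simpa using (hδ n).ne')).trans_le
        ((hGx x).symm.le.trans (measure_mono (preimage_mono (iInter_subset U n))))
    obtain ⟨C, hCU, hC, hCx⟩ := exists_isCompact_subset_lt_measure_preimage_mk (hU n) hUx
    exact ⟨C, hCU, hC, fun x => (prob_compl_lt_one_sub_of_lt_prob (hCx x)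
      (hC.measurableSet_preimage_mk x)).trans_le tsub_tsub_le⟩
  choose C hCU hC hCx using approx
  refine ⟨⋂ n, C n, iInter_mono hCU,
    (hC 0).of_isClosed_subset (isClosed_iInter fun n => (hC n).isClosed) (iInter_subset C 0),
    fun x => ?_⟩
  calc ν (Prod.mk x ⁻¹' ⋂ n, C n)ᶜ = ν (⋃ n, (Prod.mk x ⁻¹' C n)ᶜ) := by
        rw [preimage_iInter, compl_iInter]
    _ ≤ ∑' n, ν (Prod.mk x ⁻¹' C n)ᶜ := measure_iUnion_le _
    _ ≤ ∑' n, (δ n : ℝ≥0∞) := ENNReal.tsum_le_tsum fun n => (hCx n x).le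
    _ < ε := hδε

theorem IsGδ.exists_isSigmaCompact_subset_measure_preimage_mk_eq_one (hG : IsGδ G)
    (hGx : ∀ x, ν (Prod.mk x ⁻¹' G) = 1) :
    ∃ F ⊆ G, IsSigmaCompact F ∧ ∀ x, ν (Prod.mk x ⁻¹' F) = 1 := by
  choose K hKG hK hKx using fun n : ℕ =>
    hG.exists_isCompact_subset_measure_compl_preimage_mk_lt hGx
      (ENNReal.inv_ne_zero.2 (ENNReal.natCast_ne_top n))
  refine ⟨⋃ n, K n, iUnion_subset hKG, ⟨K, hK, rfl⟩, fun x => ?_⟩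
  have hFx : MeasurableSet (Prod.mk x ⁻¹' ⋃ n, K n) := by
    simpa only [preimage_iUnion] using
      MeasurableSet.iUnion fun n => (hK n).measurableSet_preimage_mk x
  rw [← prob_compl_eq_zero_iff hFx]
  by_contra h
  obtain ⟨n, hn⟩ := ENNReal.exists_inv_nat_lt h
  have hle : ν (Prod.mk x ⁻¹' ⋃ n, K n)ᶜ ≤ ν (Prod.mk x ⁻¹' K n)ᶜ :=
    measure_mono (compl_subset_compl.2 (preimage_mono (subset_iUnion K n)))
  exact ((hle.trans_lt (hKx n x)).trans hn).false

end VerticalSections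

theorem stmt4 (μ : Measure Cantor) (hμ : IsCantorMeasure μ)
    (G : Set (Cantor × Cantor)) (hG : IsGδ G)
    (hGsect : ∀ x : Cantor, μ (sect G x) = 1) :
    (∀ a : ℝ, a ∈ Set.Ioo (0 : ℝ) 1 →
      ∃ K : Set (Cantor × Cantor), IsCompact K ∧ K ⊆ G ∧
        ∀ x : Cantor, μ (sect K x) > ENNReal.ofReal (1 - a)) ∧
    (∃ F : Set (Cantor × Cantor), IsSigmaCompact F ∧ F ⊆ G ∧
      ∀ x : Cantor, μ (sect F x) = 1) := by
  -- the cylinder over no coordinates is the whole space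
  have : IsProbabilityMeasure μ := ⟨by simpa using hμ ∅ (fun _ => false)⟩
  obtain ⟨F, hFG, hF, hFx⟩ := hG.exists_isSigmaCompact_subset_measure_preimage_mk_eq_one hGsect
  refine ⟨fun a ha => ?_, F, hF, hFG, hFx⟩
  obtain ⟨K, hKG, hK, hKx⟩ :=
    hG.exists_isCompact_subset_measure_compl_preimage_mk_lt hGsect (ε := ENNReal.ofReal a)
      (by simpa using ha.1)
  refine ⟨K, hK, hKG, fun x => ?_⟩
  show ENNReal.ofReal (1 - a) < μ (Prod.mk x ⁻¹' K)
  rw [← compl_compl (Prod.mk x ⁻¹' K), prob_compl_eq_one_sub (hK.measurableSet_preimage_mk x).compl]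
  refine lt_tsub_comm.2 ?_
  rw [← ENNReal.ofReal_one, ← ENNReal.ofReal_sub _ (by linarith [ha.2]), sub_sub_cancel]
  exact hKx x
end

section
/- Let G be a G_δ subset of 2^ω × 2^ω such that μ(G|_x) = 1 for every x ∈ 2^ω and μ({x ∈ 2^ω : G|_x = 2^ω}) = 1. Then there exists a σ-compact set F ⊆ G such that μ(F|_x) = 1 for every x ∈ 2^ω and μ({x ∈ 2^ω : F|_x = 2^ω}) = 1. -/
open Set Filter Topology MeasureTheory

/-!
Write `G = ⋂ Uₙ` with `Uₙ` open. For a single open `U` with conull sections, inner regularity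
gives at each `x` a compact `C ⊆ U_x` of nearly full measure, the tube lemma spreads `C` over a
neighbourhood of `x`, and compactness of the first factor makes finitely many of these tubes
suffice, giving a compact `K ⊆ U` whose sections are all nearly full, uniformly in `x`. Doing this
for every `Uₙ` with summable errors and intersecting gives compact subsets of `G` with uniformly
nearly full sections; their union over errors `1/m` is σ-compact with conull sections.
Since the second factor is compact, `{x | G_x = 2^ω}` is again `G_δ`, so it contains a σ-compact
`S` of full measure, and `S × 2^ω ⊆ G` can be added.
-/

open scoped ENNReal

theorem ENNReal.eq_zero_of_forall_le_inv_natCast {a : ℝ≥0∞} (h : ∀ n : ℕ, a ≤ (n : ℝ≥0∞)⁻¹) :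
    a = 0 :=
  le_zero_iff.1 (ge_of_tendsto' ENNReal.tendsto_inv_nat_nhds_zero h)

theorem MeasurableSet.exists_isSigmaCompact_subset_measure_sdiff_eq_zero
    {α : Type*} [TopologicalSpace α] [T2Space α] [MeasurableSpace α] [OpensMeasurableSpace α]
    {μ : Measure α} [IsFiniteMeasure μ] [μ.InnerRegularCompactLTTop] {s : Set α}
    (hs : MeasurableSet s) : ∃ t ⊆ s, IsSigmaCompact t ∧ μ (s \ t) = 0 := by
  choose K hKs hK hKμ using fun n : ℕ ↦
    hs.exists_isCompact_sdiff_lt (measure_ne_top μ s)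
      (ENNReal.inv_ne_zero.2 (ENNReal.natCast_ne_top n))
  refine ⟨⋃ n, K n, iUnion_subset hKs, isSigmaCompact_iUnion_of_isCompact K hK,
    ENNReal.eq_zero_of_forall_le_inv_natCast fun n ↦ ?_⟩
  exact (measure_mono (sdiff_subset_sdiff_right (subset_iUnion K n))).trans (hKμ n).le

section Sections

variable {X Y : Type*} [TopologicalSpace X] [TopologicalSpace Y]

theorem IsSigmaCompact.union {s t : Set X} (hs : IsSigmaCompact s) (ht : IsSigmaCompact t) :
    IsSigmaCompact (s ∪ t) := by
  rw [union_eq_iUnion]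
  exact isSigmaCompact_iUnion _ (Bool.forall_bool.2 ⟨ht, hs⟩)

theorem IsSigmaCompact.prod {s : Set X} {t : Set Y} (hs : IsSigmaCompact s)
    (ht : IsSigmaCompact t) : IsSigmaCompact (s ×ˢ t) := by
  obtain ⟨K, hK, rfl⟩ := hs
  obtain ⟨L, hL, rfl⟩ := ht
  rw [← iUnion_prod]
  exact isSigmaCompact_iUnion_of_isCompact _ fun p ↦ (hK p.1).prod (hL p.2)

theorem IsGδ.setOf_forall_prodMk_mem [CompactSpace Y] {G : Set (X × Y)} (hG : IsGδ G) :
    IsGδ {x | ∀ y, (x, y) ∈ G} := by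
  obtain ⟨U, hU, rfl⟩ := hG.eq_iInter_nat
  have hopen : ∀ n, IsOpen {x | ∀ y, (x, y) ∈ U n} := fun n ↦ by
    have : {x | ∀ y, (x, y) ∈ U n} = (Prod.fst '' (U n)ᶜ)ᶜ := by
      ext x; simp
    exact this ▸ (isClosedMap_fst_of_compactSpace _ (hU n).isClosed_compl).isOpen_compl
  convert IsGδ.iInter_of_isOpen hopen using 1
  ext x; simp only [mem_iInter, mem_ofPred_eq]; exact forall_comm

variable [MeasurableSpace Y] [OpensMeasurableSpace Y] [T2Space Y] {ν : Measure Y}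
  [IsFiniteMeasure ν] [ν.InnerRegularCompactLTTop]

theorem IsOpen.exists_isCompact_subset_measure_compl_sections_lt [CompactSpace X]
    [RegularSpace X] {U : Set (X × Y)} (hU : IsOpen U)
    (hUν : ∀ x, ν (Prod.mk x ⁻¹' U)ᶜ = 0) {ε : ℝ≥0∞} (hε : ε ≠ 0) :
    ∃ K, IsCompact K ∧ IsClosed K ∧ K ⊆ U ∧ ∀ x, ν (Prod.mk x ⁻¹' K)ᶜ < ε := by
  have tube : ∀ x, ∃ N ∈ 𝓝 x, ∃ C, IsClosed N ∧ IsCompact C ∧ N ×ˢ C ⊆ U ∧ ν Cᶜ < ε := by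
    intro x
    obtain ⟨C, hCU, hC, hCε⟩ := (hU.preimage (Continuous.prodMk_right x)).measurableSet
      |>.exists_isCompact_sdiff_lt (measure_ne_top ν _) hε
    obtain ⟨u, v, hu, -, hxu, hCv, huv⟩ := generalized_tube_lemma isCompact_singleton hC hU
      (by rintro ⟨x', y⟩ ⟨rfl, hy⟩; exact hCU hy)
    obtain ⟨N, hN, hNc, hNu⟩ := exists_mem_nhds_isClosed_subset (hu.mem_nhds (hxu rfl))
    refine ⟨N, hN, C, hNc, hC, (prod_mono hNu hCv).trans huv, ?_⟩
    calc ν Cᶜ ≤ ν ((Prod.mk x ⁻¹' U)ᶜ ∪ (Prod.mk x ⁻¹' U \ C)) := measure_mono fun y hy ↦ by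
          by_cases h : y ∈ Prod.mk x ⁻¹' U
          exacts [Or.inr ⟨h, hy⟩, Or.inl h]
      _ ≤ ν (Prod.mk x ⁻¹' U)ᶜ + ν (Prod.mk x ⁻¹' U \ C) := measure_union_le _ _
      _ < ε := by rwa [hUν, zero_add]
  choose N hN C hNc hC hNCU hCε using tube
  obtain ⟨t, ht⟩ := finite_cover_nhds hN
  refine ⟨⋃ x ∈ t, N x ×ˢ C x, t.isCompact_biUnion fun x _ ↦ (hNc x).isCompact.prod (hC x),
    isClosed_biUnion_finset fun x _ ↦ (hNc x).prod (hC x).isClosed,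
    iUnion₂_subset fun x _ ↦ hNCU x, fun x' ↦ ?_⟩
  obtain ⟨x, hxt, hx'⟩ := mem_iUnion₂.1 (ht.symm ▸ mem_univ x' : x' ∈ ⋃ x ∈ t, N x)
  refine lt_of_le_of_lt (measure_mono (compl_subset_compl.2 fun y hy ↦ ?_)) (hCε x)
  exact mem_iUnion₂.2 ⟨x, hxt, hx', hy⟩

theorem IsGδ.exists_isCompact_subset_measure_compl_sections_lt [CompactSpace X]
    [RegularSpace X] {G : Set (X × Y)} (hG : IsGδ G)
    (hGν : ∀ x, ν (Prod.mk x ⁻¹' G)ᶜ = 0) {ε : ℝ≥0∞} (hε : ε ≠ 0) :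
    ∃ K, IsCompact K ∧ K ⊆ G ∧ ∀ x, ν (Prod.mk x ⁻¹' K)ᶜ < ε := by
  obtain ⟨U, hU, rfl⟩ := hG.eq_iInter_nat
  obtain ⟨δ, hδ, hδε⟩ := ENNReal.exists_pos_sum_of_countable hε ℕ
  choose K hK hKc hKU hKν using fun n ↦
    (hU n).exists_isCompact_subset_measure_compl_sections_lt
      (fun x ↦ measure_mono_null (compl_subset_compl.2 (preimage_mono (iInter_subset U n)))
        (hGν x)) (ENNReal.coe_ne_zero.2 (hδ n).ne')
  refine ⟨⋂ n, K n, (hK 0).of_isClosed_subset (isClosed_iInter hKc) (iInter_subset K 0),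
    iInter_mono hKU, fun x ↦ ?_⟩
  calc ν (Prod.mk x ⁻¹' ⋂ n, K n)ᶜ = ν (⋃ n, (Prod.mk x ⁻¹' K n)ᶜ) := by
        rw [preimage_iInter, compl_iInter]
    _ ≤ ∑' n, ν (Prod.mk x ⁻¹' K n)ᶜ := measure_iUnion_le _
    _ ≤ ∑' n, (δ n : ℝ≥0∞) := ENNReal.tsum_le_tsum fun n ↦ (hKν n x).le
    _ < ε := hδε

theorem IsGδ.exists_isSigmaCompact_subset_measure_compl_sections_eq_zero [CompactSpace X]
    [RegularSpace X] {G : Set (X × Y)} (hG : IsGδ G) (hGν : ∀ x, ν (Prod.mk x ⁻¹' G)ᶜ = 0) :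
    ∃ F, IsSigmaCompact F ∧ F ⊆ G ∧ ∀ x, ν (Prod.mk x ⁻¹' F)ᶜ = 0 := by
  choose K hK hKG hKν using fun n : ℕ ↦ hG.exists_isCompact_subset_measure_compl_sections_lt
    hGν (ENNReal.inv_ne_zero.2 (ENNReal.natCast_ne_top n))
  refine ⟨⋃ n, K n, isSigmaCompact_iUnion_of_isCompact K hK, iUnion_subset hKG,
    fun x ↦ ENNReal.eq_zero_of_forall_le_inv_natCast fun n ↦ ?_⟩
  exact (measure_mono (compl_subset_compl.2 (preimage_mono (subset_iUnion K n)))).trans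
    (hKν n x).le

end Sections

theorem stmt5 (μ : Measure Cantor) (hμ : IsCantorMeasure μ)
    (G : Set (Cantor × Cantor)) (hG : IsGδ G)
    (hGsect : ∀ x : Cantor, μ (sect G x) = 1)
    (hGfull : μ {x : Cantor | sect G x = univ} = 1) :
    ∃ F : Set (Cantor × Cantor), IsSigmaCompact F ∧ F ⊆ G ∧
      (∀ x : Cantor, μ (sect F x) = 1) ∧
      μ {x : Cantor | sect F x = univ} = 1 := by
  have : IsProbabilityMeasure μ := ⟨by simpa using hμ ∅ fun _ ↦ false⟩
  have hGμ : ∀ x, μ (sect G x)ᶜ = 0 := fun x ↦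
    (prob_compl_eq_zero_iff (hG.preimage (Continuous.prodMk_right x)).measurableSet).2 (hGsect x)
  have hfull : {x | sect G x = univ} = {x | ∀ y, (x, y) ∈ G} := by
    ext x; simp [sect, eq_univ_iff_forall]
  obtain ⟨K, hK, hKG, hKμ⟩ := hG.exists_isSigmaCompact_subset_measure_compl_sections_eq_zero hGμ
  obtain ⟨S, hSG, hS, hSμ⟩ :=
    hG.setOf_forall_prodMk_mem.measurableSet.exists_isSigmaCompact_subset_measure_sdiff_eq_zero
      (μ := μ)
  refine ⟨K ∪ S ×ˢ univ, hK.union (hS.prod isSigmaCompact_univ), ?_, fun x ↦ ?_, ?_⟩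
  · exact union_subset hKG fun p hp ↦ hSG hp.1 p.2
  · exact (measure_congr (ae_eq_univ.2 (measure_mono_null
      (compl_subset_compl.2 subset_union_left) (hKμ x)))).trans measure_univ
  · refine le_antisymm prob_le_one ?_
    calc (1 : ℝ≥0∞) = μ S := by rw [← hGfull, hfull, measure_eq_measure_of_null_sdiff hSG hSμ]
      _ ≤ _ := measure_mono fun x hx ↦ eq_univ_of_forall fun y ↦ Or.inr ⟨hx, trivial⟩
end

section
/- Let X ⊆ 2^ω × 2^ω be a set such that for each open set G ⊆ 2^ω × 2^ω containing X there is an x ∈ 2^ω with G|_x = 2^ω. Then there is a homeomorphic copy of X inside 2^ω which is not perfectly meager in the transitive sense (PMT). -/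
open Set Filter Topology MeasureTheory

/-!
Interleaving coordinates identifies `2^ω × 2^ω` with `2^ω`, and under this identification the
translates of the perfect set `P = {0} × 2^ω` are exactly the vertical lines `{a} × 2^ω`. So if the
copy of `X` were PMT, `X` would be covered by a σ-compact set `K` all of whose vertical sections are
meagre. Such a `K` is disjoint from a closed set `D` meeting every vertical line: build open sets
`C₀ ⊇ C₁ ⊇ ⋯` meeting every vertical line with `closure Cₙ₊₁` disjoint from the `n`-th compact piece
of `K`, using that a nowhere dense section cannot swallow the open section of `Cₙ` and compactness
of the base to pass to a finite union of boxes; then `D = ⋂ closure Cₙ`. The open set `Dᶜ ⊇ X` has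
no full section, contradicting the hypothesis on `X`.
-/

open Function

instance PerfectSpace.pi_of_infinite {ι X : Type*} [Infinite ι] [TopologicalSpace X]
    [Nontrivial X] : PerfectSpace (ι → X) := by
  classical
  refine ⟨fun x _ => accPt_iff_nhds.2 fun U hU => ?_⟩
  rw [nhds_pi, Filter.mem_pi] at hU
  obtain ⟨I, hI, t, ht, htU⟩ := hU
  obtain ⟨n, hn⟩ := hI.exists_notMem
  obtain ⟨b, hb⟩ := exists_ne (x n)
  refine ⟨update x n b, ⟨htU fun i hi => ?_, trivial⟩, fun h => hb (by simpa using congr_fun h n)⟩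
  rw [update_of_ne (ne_of_mem_of_not_mem hi hn)]
  exact mem_of_mem_nhds (ht i)

theorem Topology.IsClosedEmbedding.perfect_range {X Y : Type*} [TopologicalSpace X]
    [TopologicalSpace Y] [PerfectSpace X] {f : X → Y} (hf : IsClosedEmbedding f) :
    Perfect (range f) := by
  refine ⟨hf.isClosed_range, ?_⟩
  rintro _ ⟨x, rfl⟩
  simpa using (PerfectSpace.univ_preperfect x trivial).map hf.continuous.continuousAt hf.injective

section Sections

variable {X Y : Type*} [TopologicalSpace X] [TopologicalSpace Y]

theorem exists_isOpen_closure_subset_sdiff [CompactSpace X] [RegularSpace X] [RegularSpace Y]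
    {C K : Set (X × Y)} (hC : IsOpen C) (hCx : ∀ x, ∃ y, (x, y) ∈ C) (hK : IsClosed K)
    (hKx : ∀ x, interior (Prod.mk x ⁻¹' K) = ∅) :
    ∃ C' : Set (X × Y), IsOpen C' ∧ (∀ x, ∃ y, (x, y) ∈ C') ∧ closure C' ⊆ C \ K := by
  have hCK : ∀ x, ∃ y, (x, y) ∈ C \ K := by
    intro x
    obtain ⟨y, hy⟩ := hCx x
    by_contra! h
    have : Prod.mk x ⁻¹' C ⊆ interior (Prod.mk x ⁻¹' K) :=
      interior_maximal (fun y hy => not_not.1 fun hK => h y ⟨hy, hK⟩)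
        (hC.preimage (Continuous.prodMk_right x))
    simpa [hKx x] using this hy
  choose y hy using hCK
  have hbox : ∀ x, ∃ U V, IsOpen U ∧ x ∈ U ∧ IsOpen V ∧ y x ∈ V ∧ closure (U ×ˢ V) ⊆ C \ K := by
    intro x
    obtain ⟨t, ht, htc, htCK⟩ :=
      exists_mem_nhds_isClosed_subset ((hC.sdiff hK).mem_nhds (hy x))
    obtain ⟨U, V, hU, hxU, hV, hyV, hUVt⟩ := mem_nhds_prod_iff'.1 ht
    exact ⟨U, V, hU, hxU, hV, hyV, (closure_minimal hUVt htc).trans htCK⟩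
  choose U V hU hxU hV hyV hUV using hbox
  obtain ⟨s, hs⟩ := CompactSpace.elim_nhds_subcover U fun x => (hU x).mem_nhds (hxU x)
  refine ⟨⋃ x ∈ s, U x ×ˢ V x, isOpen_biUnion fun x _ => (hU x).prod (hV x), fun x => ?_, ?_⟩
  · obtain ⟨x', hx', hxU'⟩ := mem_iUnion₂.1 (hs.symm ▸ mem_univ x : x ∈ ⋃ x ∈ s, U x)
    exact ⟨y x', mem_iUnion₂.2 ⟨x', hx', hxU', hyV x'⟩⟩
  · rw [Finset.closure_biUnion]
    exact iUnion₂_subset fun x _ => hUV x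

theorem exists_isOpen_forall_subset_forall_exists_notMem [CompactSpace X] [RegularSpace X]
    [CompactSpace Y] [RegularSpace Y] [Nonempty Y] (K : ℕ → Set (X × Y))
    (hK : ∀ n, IsClosed (K n)) (hKx : ∀ n x, interior (Prod.mk x ⁻¹' K n) = ∅) :
    ∃ G : Set (X × Y), IsOpen G ∧ (∀ n, K n ⊆ G) ∧ ∀ x, ∃ y, (x, y) ∉ G := by
  let S := {C : Set (X × Y) // IsOpen C ∧ ∀ x, ∃ y, (x, y) ∈ C}
  have hnext : ∀ (n : ℕ) (C : S), ∃ C' : S, closure C'.1 ⊆ C.1 \ K n := fun n C =>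
    let ⟨C', hC', hC'x, hsub⟩ := exists_isOpen_closure_subset_sdiff C.2.1 C.2.2 (hK n) (hKx n)
    ⟨⟨C', hC', hC'x⟩, hsub⟩
  choose next hnext using hnext
  let C : ℕ → S := fun n => Nat.rec ⟨univ, isOpen_univ, fun _ => ⟨Classical.arbitrary Y, trivial⟩⟩
    next n
  have hCsucc (n : ℕ) : closure (C (n + 1)).1 ⊆ (C n).1 \ K n := hnext n (C n)
  refine ⟨(⋂ n, closure (C n).1)ᶜ, (isClosed_iInter fun n => isClosed_closure).isOpen_compl,
    fun n p hp hpD => (hCsucc n (mem_iInter.1 hpD (n + 1))).2 hp, fun x => ?_⟩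
  have hclosed (n : ℕ) : IsClosed (Prod.mk x ⁻¹' closure (C n).1) :=
    isClosed_closure.preimage (Continuous.prodMk_right x)
  obtain ⟨y, hy⟩ := IsCompact.nonempty_iInter_of_sequence_nonempty_isCompact_isClosed
    (fun n => Prod.mk x ⁻¹' closure (C n).1)
    (fun n => preimage_mono ((hCsucc n).trans (sdiff_subset.trans subset_closure)))
    (fun n => let ⟨y, hy⟩ := (C n).2.2 x; ⟨y, subset_closure hy⟩)
    (hclosed 0).isCompact hclosed
  exact ⟨y, not_not.2 (mem_iInter.2 fun n => mem_iInter.1 hy n)⟩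

theorem IsSigmaCompact.exists_isOpen_superset_forall_exists_notMem [CompactSpace X] [T2Space X]
    [CompactSpace Y] [T2Space Y] [Nonempty Y] {K : Set (X × Y)} (hK : IsSigmaCompact K)
    (hKx : ∀ x, IsMeagre (Prod.mk x ⁻¹' K)) :
    ∃ G : Set (X × Y), IsOpen G ∧ K ⊆ G ∧ ∀ x, ∃ y, (x, y) ∉ G := by
  obtain ⟨K, hKc, rfl⟩ := hK
  obtain ⟨G, hG, hKG, hGx⟩ := exists_isOpen_forall_subset_forall_exists_notMem K
    (fun n => (hKc n).isClosed) fun n x => by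
      by_contra h
      exact not_isMeagre_of_isOpen isOpen_interior (nonempty_iff_ne_empty.2 h)
        ((hKx x).mono (interior_subset.trans (preimage_mono (subset_iUnion K n))))
  exact ⟨G, hG, iUnion_subset hKG, hGx⟩

end Sections

noncomputable def interleave : Cantor × Cantor ≃ₜ Cantor :=
  Homeomorph.sumArrowHomeomorphProdArrow.symm.trans
    (Homeomorph.piCongrLeft (Y := fun _ => Bool) Equiv.natSumNatEquivNat)

theorem interleave_symm_cadd (u v : Cantor) :
    interleave.symm (cadd u v) =
      (cadd (interleave.symm u).1 (interleave.symm v).1,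
        cadd (interleave.symm u).2 (interleave.symm v).2) :=
  rfl

theorem cadd_interleave (p q : Cantor × Cantor) :
    cadd (interleave p) (interleave q) = interleave (cadd p.1 q.1, cadd p.2 q.2) :=
  interleave.symm.injective (by simp [interleave_symm_cadd])

theorem tAdd_interleave_range (a : Cantor) :
    tAdd (interleave (a, fun _ => false)) (range fun y => interleave (fun _ => false, y)) =
      range fun y => interleave (a, y) := by
  rw [tAdd, ← range_comp]
  congr 1
  funext y
  rw [comp_apply, cadd_interleave]
  congr <;> funext n <;> simp [cadd]

theorem isClosedEmbedding_interleave_prodMk (a : Cantor) :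
    IsClosedEmbedding fun y => interleave (a, y) :=
  (interleave.continuous.comp (.prodMk_right a)).isClosedEmbedding
    (interleave.injective.comp (Prod.mk_right_injective a))

theorem isMeagre_sect_preimage_interleave {F : Set Cantor}
    (hF : ∀ t, IsMeagre (Subtype.val ⁻¹' F :
      Set (tAdd t (range fun y => interleave (fun _ => false, y))))) (a : Cantor) :
    IsMeagre (Prod.mk a ⁻¹' (interleave ⁻¹' F)) := by
  have h := hF (interleave (a, fun _ => false))
  rw [tAdd_interleave_range] at h
  let e := (isClosedEmbedding_interleave_prodMk a).isEmbedding.toHomeomorph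
  exact h.preimage_of_isOpenMap e.continuous e.isOpenMap

theorem stmt6 (X : Set (Cantor × Cantor))
    (hX : ∀ G : Set (Cantor × Cantor), IsOpen G → X ⊆ G →
      ∃ x : Cantor, sect G x = univ) :
    ∃ Z : Set Cantor, Nonempty (X ≃ₜ Z) ∧ ¬ PMT Z := by
  refine ⟨interleave '' X, ⟨interleave.image X⟩, fun hZ => ?_⟩
  obtain ⟨F, hFσ, hZF, hF⟩ := hZ _
    (isClosedEmbedding_interleave_prodMk fun _ => false).perfect_range (range_nonempty _)
  obtain ⟨G, hG, hFG, hGx⟩ := (interleave.isSigmaCompact_preimage.2 hFσ)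
    |>.exists_isOpen_superset_forall_exists_notMem (isMeagre_sect_preimage_interleave hF)
  obtain ⟨x, hx⟩ := hX G hG fun p hp => hFG (hZF (mem_image_of_mem _ hp))
  obtain ⟨y, hy⟩ := hGx x
  exact hy (show y ∈ sect G x from hx ▸ mem_univ y)
end

section
/- A set X ⊆ 2^ω is PMT if and only if for any sequence (P_n)_{n∈ω} of perfect subsets of 2^ω, there are compact sets F_0, F_1, … ⊆ 2^ω such that X ⊆ ⋃_n F_n and for all natural numbers n, m and every t ∈ 2^ω, the set t ⊕ P_n is not contained in F_m. -/
open Set Filter Topology MeasureTheory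

/-! Forward direction: pieces of the perfect sets `P n` are translated into pairwise disjoint
clopen sets shrinking to the zero sequence; the closure `Q` of their union is perfect and each
piece is relatively open in `Q`. If some `t ⊕ P n` lay inside a compact `F m`, a translate of `Q`
would meet `F` in a nonempty relatively open set, which is not meagre by the Baire category
theorem.

Backward direction: take for `P n` the closures of the sets `P ∩ b`, `b` in a countable base.
A compact `F m` containing no translate of any of them meets every translate of `P` in a closed
set with empty relative interior. -/

section Topology

open Function TopologicalSpace

variable {X Y : Type*} [TopologicalSpace X] [TopologicalSpace Y]

theorem Preperfect.image_homeomorph {C : Set X} (hC : Preperfect C) (h : X ≃ₜ Y) :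
    Preperfect (h '' C) := by
  rintro _ ⟨x, hx, rfl⟩
  rw [← h.isOpenEmbedding.accPt_comap_iff, comap_principal, h.preimage_image]
  exact hC x hx

theorem Perfect.image_homeomorph {C : Set X} (hC : Perfect C) (h : X ≃ₜ Y) :
    Perfect (h '' C) :=
  ⟨h.isClosed_image.mpr hC.closed, hC.acc.image_homeomorph h⟩

theorem Preperfect.iUnion {ι : Type*} {C : ι → Set X} (hC : ∀ i, Preperfect (C i)) :
    Preperfect (⋃ i, C i) := by
  intro x hx
  obtain ⟨i, hi⟩ := mem_iUnion.mp hx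
  exact (hC i x hi).mono (principal_mono.mpr (subset_iUnion C i))

theorem closure_iUnion_inter_subset_of_pairwise_disjoint {ι : Type*} {U R : ι → Set X}
    (hU : ∀ i, IsOpen (U i)) (hUd : Pairwise (Disjoint on U)) (hRU : ∀ i, R i ⊆ U i)
    (hR : ∀ i, IsClosed (R i)) (i : ι) : closure (⋃ j, R j) ∩ U i ⊆ R i := by
  have hinter : U i ∩ ⋃ j, R j = R i := by
    refine Subset.antisymm (fun x ⟨hxU, hxR⟩ => ?_)
      fun x hx => ⟨hRU i hx, mem_iUnion_of_mem i hx⟩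
    obtain ⟨j, hj⟩ := mem_iUnion.mp hxR
    obtain rfl : j = i := by_contra fun hji => (hUd hji).le_bot ⟨hRU j hj, hxU⟩
    exact hj
  calc closure (⋃ j, R j) ∩ U i ⊆ closure (U i ∩ ⋃ j, R j) := by
        rw [inter_comm]; exact (hU i).inter_closure
    _ = R i := by rw [hinter, (hR i).closure_eq]

theorem Perfect.exists_seq_subset_closure_inter [SecondCountableTopology X] {P : Set X}
    (hP : Perfect P) (hne : P.Nonempty) :
    ∃ Q : ℕ → Set X, (∀ n, Perfect (Q n) ∧ (Q n).Nonempty) ∧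
      ∀ U, IsOpen U → (P ∩ U).Nonempty → ∃ n, Q n ⊆ closure (P ∩ U) := by
  have hB := isBasis_countableBasis X
  have hcover : ∀ U, IsOpen U → (P ∩ U).Nonempty →
      ∃ b ∈ {b ∈ countableBasis X | (b ∩ P).Nonempty}, b ⊆ U := by
    rintro U hU ⟨x, hxP, hxU⟩
    obtain ⟨b, hb, hxb, hbU⟩ := hB.exists_subset_of_mem_open hxU hU
    exact ⟨b, ⟨hb, x, hxb, hxP⟩, hbU⟩
  obtain ⟨b, hbS, -⟩ := hcover univ isOpen_univ (by simpa using hne)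
  obtain ⟨f, hf⟩ :=
    ((countable_countableBasis X).mono (sep_subset _ _)).exists_eq_range ⟨b, hbS⟩
  have hfS : ∀ n, f n ∈ countableBasis X ∧ (f n ∩ P).Nonempty := fun n =>
    (hf.symm ▸ mem_range_self n : f n ∈ {b ∈ countableBasis X | (b ∩ P).Nonempty})
  refine ⟨fun n => closure (f n ∩ P), fun n => ?_, fun U hU hPU => ?_⟩
  · obtain ⟨x, hx⟩ := (hfS n).2
    exact hP.closure_nhds_inter x hx.2 hx.1 (hB.isOpen (hfS n).1)
  · obtain ⟨b, hbS, hbU⟩ := hcover U hU hPU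
    obtain ⟨n, rfl⟩ := hf ▸ hbS
    exact ⟨n, closure_mono fun x hx => ⟨hx.2, hbU hx.1⟩⟩

theorem isNowhereDense_val_preimage_of_forall_not_subset {S K : Set X} (hK : IsClosed K)
    (h : ∀ U, IsOpen U → (S ∩ U).Nonempty → ¬ S ∩ U ⊆ K) :
    IsNowhereDense (Subtype.val ⁻¹' K : Set S) := by
  rw [(hK.preimage continuous_subtype_val).isNowhereDense_iff, ← not_nonempty_iff_eq_empty]
  rintro ⟨z, hz⟩
  obtain ⟨U, hU, hUW⟩ := isOpen_induced_iff.mp (isOpen_interior (s := Subtype.val ⁻¹' K))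
  refine h U hU ⟨z, z.2, ?_⟩ fun y ⟨hyS, hyU⟩ => ?_
  · rw [← hUW] at hz; exact hz
  · have hy : (⟨y, hyS⟩ : S) ∈ Subtype.val ⁻¹' U := hyU
    rw [hUW] at hy
    exact interior_subset (s := (Subtype.val ⁻¹' K : Set S)) hy

theorem not_isMeagre_val_preimage_of_inter_subset [T2Space X] {S K U : Set X} (hS : IsCompact S)
    (hU : IsOpen U) (hne : (S ∩ U).Nonempty) (hSU : S ∩ U ⊆ K) :
    ¬ IsMeagre (Subtype.val ⁻¹' K : Set S) := by
  have : CompactSpace S := isCompact_iff_compactSpace.mp hS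
  obtain ⟨x, hxS, hxU⟩ := hne
  exact mt (IsMeagre.mono fun y hy => hSU ⟨y.2, hy⟩)
    (not_isMeagre_of_isOpen (hU.preimage continuous_subtype_val) ⟨⟨x, hxS⟩, hxU⟩)

end Topology

namespace PiNat

theorem isClosed_cylinder_s7 {E : ℕ → Type*} [∀ n, TopologicalSpace (E n)]
    [∀ n, DiscreteTopology (E n)] (x : ∀ n, E n) (n : ℕ) : IsClosed (cylinder x n) := by
  rw [cylinder_eq_pi]
  exact isClosed_set_pi fun _ _ => isClosed_discrete _

end PiNat

open Function PiNat

section Cantor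

theorem cadd_cadd_cancel_right (s t : Cantor) : cadd (cadd s t) t = s := by
  funext n; simp [cadd]

theorem cadd_cadd_cancel_left (s t : Cantor) : cadd s (cadd s t) = t := by
  funext n; simp [cadd]

theorem continuous_cadd (t : Cantor) : Continuous (cadd t) :=
  continuous_pi fun n => continuous_of_discreteTopology.comp (continuous_apply n)

def caddHomeomorph (t : Cantor) : Cantor ≃ₜ Cantor where
  toFun := cadd t
  invFun := cadd t
  left_inv := cadd_cadd_cancel_left t
  right_inv := cadd_cadd_cancel_left t
  continuous_toFun := continuous_cadd t
  continuous_invFun := continuous_cadd t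

theorem tAdd_eq_image (t : Cantor) (A : Set Cantor) : tAdd t A = caddHomeomorph t '' A := rfl

theorem tAdd_tAdd (s t : Cantor) (A : Set Cantor) : tAdd s (tAdd t A) = tAdd (cadd s t) A := by
  simp only [tAdd, image_image]
  congr 1
  funext x n
  simp [cadd]

theorem tAdd_mono (t : Cantor) {A B : Set Cantor} (h : A ⊆ B) : tAdd t A ⊆ tAdd t B :=
  image_mono h

theorem tAdd_inter (t : Cantor) (A B : Set Cantor) : tAdd t (A ∩ B) = tAdd t A ∩ tAdd t B :=
  image_inter (caddHomeomorph t).injective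

theorem tAdd_tAdd_self (t : Cantor) (A : Set Cantor) : tAdd t (tAdd t A) = A := by
  simp only [tAdd, image_image, cadd_cadd_cancel_left, image_id']

theorem tAdd_inter_tAdd (t : Cantor) (A B : Set Cantor) :
    tAdd t (A ∩ tAdd t B) = tAdd t A ∩ B := by
  rw [tAdd_inter, tAdd_tAdd_self]

theorem closure_tAdd (t : Cantor) (A : Set Cantor) : closure (tAdd t A) = tAdd t (closure A) :=
  ((caddHomeomorph t).image_closure A).symm

theorem isOpen_tAdd (t : Cantor) {U : Set Cantor} (hU : IsOpen U) : IsOpen (tAdd t U) :=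
  (caddHomeomorph t).isOpen_image.mpr hU

theorem isCompact_tAdd (t : Cantor) {K : Set Cantor} (hK : IsCompact K) :
    IsCompact (tAdd t K) :=
  hK.image (continuous_cadd t)

theorem perfect_tAdd (t : Cantor) {P : Set Cantor} (hP : Perfect P) :
    Perfect (tAdd t P) :=
  hP.image_homeomorph (caddHomeomorph t)

theorem tAdd_cylinder (t x : Cantor) (n : ℕ) :
    tAdd t (cylinder x n) = cylinder (cadd t x) n := by
  ext y
  rw [tAdd_eq_image, (caddHomeomorph t).image_eq_preimage_symm]
  simp only [mem_preimage, mem_cylinder_iff]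
  refine forall₂_congr fun i _ => ?_
  change xor (t i) (y i) = x i ↔ y i = xor (t i) (x i)
  cases t i <;> cases y i <;> cases x i <;> decide

theorem pairwise_disjoint_cylinder_indicator :
    Pairwise (Disjoint on fun n => cylinder (fun i => decide (i = n) : Cantor) (n + 1)) := by
  refine (pairwise_disjoint_on _).mpr fun m n hmn => disjoint_left.mpr fun y hym hyn => ?_
  have htrue := hym m (Nat.lt_succ_self m)
  have hfalse := hyn m (by omega)
  simp only [decide_true] at htrue
  simp [hmn.ne, htrue] at hfalse

theorem exists_perfect_inter_open_subset_tAdd (P : ℕ → Set Cantor)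
    (hP : ∀ n, Perfect (P n) ∧ (P n).Nonempty) :
    ∃ Q : Set Cantor, Perfect Q ∧ ∀ n, ∃ c U, IsOpen U ∧ (Q ∩ U).Nonempty ∧
      Q ∩ U ⊆ tAdd c (P n) := by
  choose p hp using fun n => (hP n).2
  set U : ℕ → Set Cantor := fun n => cylinder (fun i => decide (i = n)) (n + 1)
  set c : ℕ → Cantor := fun n => cadd (fun i => decide (i = n)) (p n)
  set R : ℕ → Set Cantor := fun n => tAdd (c n) (P n ∩ cylinder (p n) (n + 1))
  have hRU : ∀ n, R n ⊆ U n := fun n => by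
    refine (tAdd_mono _ inter_subset_right).trans ?_
    rw [tAdd_cylinder, cadd_cadd_cancel_right]
  have hRperf : ∀ n, Perfect (R n) := fun n =>
    perfect_tAdd _ ⟨(hP n).1.closed.inter (isClosed_cylinder_s7 _ _),
      inter_comm (P n) _ ▸ (hP n).1.acc.open_inter (isOpen_cylinder _ _ _)⟩
  have hQR := closure_iUnion_inter_subset_of_pairwise_disjoint (fun n => isOpen_cylinder _ _ _)
    pairwise_disjoint_cylinder_indicator hRU fun n => (hRperf n).closed
  refine ⟨closure (⋃ n, R n), (Preperfect.iUnion fun n => (hRperf n).acc).perfect_closure,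
    fun n => ⟨c n, U n, isOpen_cylinder _ _ _, ?_, ?_⟩⟩
  · have hmem : cadd (c n) (p n) ∈ R n := ⟨p n, ⟨hp n, self_mem_cylinder _ _⟩, rfl⟩
    exact ⟨_, subset_closure (mem_iUnion_of_mem n hmem), hRU n hmem⟩
  · exact (hQR n).trans (tAdd_mono _ inter_subset_left)

end Cantor

theorem forall_seq_not_tAdd_subset_of_pmt {X : Set Cantor} (hX : PMT X)
    (P : ℕ → Set Cantor) (hP : ∀ n, Perfect (P n) ∧ (P n).Nonempty) :
    ∃ F : ℕ → Set Cantor, (∀ m, IsCompact (F m)) ∧ X ⊆ ⋃ m, F m ∧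
      ∀ n m : ℕ, ∀ t : Cantor, ¬ tAdd t (P n) ⊆ F m := by
  obtain ⟨Q, hQ, hQP⟩ := exists_perfect_inter_open_subset_tAdd P hP
  have hQne : Q.Nonempty := let ⟨_, _, _, hne, _⟩ := hQP 0; hne.mono inter_subset_left
  obtain ⟨F, ⟨K, hK, rfl⟩, hXK, hmeagre⟩ := hX Q hQ hQne
  refine ⟨K, hK, hXK, fun n m t hsub => ?_⟩
  obtain ⟨c, U, hU, hne, hQU⟩ := hQP n
  have hpiece : tAdd (cadd t c) Q ∩ tAdd (cadd t c) U ⊆ ⋃ m, K m := calc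
    tAdd (cadd t c) Q ∩ tAdd (cadd t c) U = tAdd (cadd t c) (Q ∩ U) := (tAdd_inter _ _ _).symm
    _ ⊆ tAdd (cadd t c) (tAdd c (P n)) := tAdd_mono _ hQU
    _ = tAdd t (P n) := by rw [tAdd_tAdd, cadd_cadd_cancel_right]
    _ ⊆ ⋃ m, K m := hsub.trans (subset_iUnion K m)
  exact not_isMeagre_val_preimage_of_inter_subset (isCompact_tAdd _ hQ.closed.isCompact)
    (isOpen_tAdd _ hU) (by rw [← tAdd_inter]; exact hne.image _) hpiece (hmeagre _)

theorem pmt_of_forall_seq_not_tAdd_subset {X : Set Cantor}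
    (h : ∀ P : ℕ → Set Cantor, (∀ n, Perfect (P n) ∧ (P n).Nonempty) →
      ∃ F : ℕ → Set Cantor, (∀ m, IsCompact (F m)) ∧ X ⊆ ⋃ m, F m ∧
        ∀ n m : ℕ, ∀ t : Cantor, ¬ tAdd t (P n) ⊆ F m) :
    PMT X := by
  intro P hP hPne
  obtain ⟨Q, hQ, hQP⟩ := hP.exists_seq_subset_closure_inter hPne
  obtain ⟨F, hF, hXF, hFQ⟩ := h Q hQ
  refine ⟨⋃ m, F m, ⟨F, hF, rfl⟩, hXF, fun t => ?_⟩
  rw [preimage_iUnion]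
  refine isMeagre_iUnion fun m =>
    (isNowhereDense_val_preimage_of_forall_not_subset (hF m).isClosed ?_).isMeagre
  intro U hU hne hsub
  rw [← tAdd_inter_tAdd] at hne hsub
  obtain ⟨n, hn⟩ := hQP (tAdd t U) (isOpen_tAdd t hU) (by simpa [tAdd] using hne)
  refine hFQ n m t ?_
  calc tAdd t (Q n) ⊆ tAdd t (closure (P ∩ tAdd t U)) := tAdd_mono t hn
    _ = closure (tAdd t (P ∩ tAdd t U)) := (closure_tAdd _ _).symm
    _ ⊆ F m := closure_minimal hsub (hF m).isClosed

theorem stmt7 (X : Set Cantor) :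
    PMT X ↔
      ∀ P : ℕ → Set Cantor, (∀ n, Perfect (P n) ∧ (P n).Nonempty) →
        ∃ F : ℕ → Set Cantor, (∀ m, IsCompact (F m)) ∧ X ⊆ ⋃ m, F m ∧
          ∀ n m : ℕ, ∀ t : Cantor, ¬ tAdd t (P n) ⊆ F m :=
  ⟨forall_seq_not_tAdd_subset_of_pmt, pmt_of_forall_seq_not_tAdd_subset⟩
end

section
/- If X is a λ'-subset of 2^ω × 2^ω that has the Hurewicz covering property, then X is totally imperfect, i.e., X contains no homeomorphic copy of the Cantor space. -/
open Set Filter Topology MeasureTheory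

/-
A λ'-set is already a λ-set: each countable subset is a relative Gδ. If such a set contained a
nonempty perfect set `P`, a countable dense subset of `P` would be a countable dense Gδ in the
Baire space `P`; as `P` has no isolated points, the complement of a countable set is residual as
well, so the empty set would be residual.
-/

section Perfect

variable {X : Type*} [TopologicalSpace X]

theorem Preperfect.perfectSpace_subtype {C : Set X} (hC : Preperfect C) : PerfectSpace C := by
  refine ⟨preperfect_iff_nhds.2 fun x _ U hU => ?_⟩
  have hU' : U ∈ comap Subtype.val (𝓝 (x : X)) := nhds_subtype C x ▸ hU
  obtain ⟨V, hV, hVU⟩ := hU'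
  obtain ⟨y, ⟨hyV, hyC⟩, hyx⟩ := preperfect_iff_nhds.1 hC x x.2 V hV
  exact ⟨⟨y, hyC⟩, ⟨hVU hyV, mem_univ _⟩, fun h => hyx (congrArg Subtype.val h)⟩

theorem Set.Countable.compl_mem_residual [T1Space X] [PerfectSpace X] {s : Set X}
    (hs : s.Countable) : sᶜ ∈ residual X := by
  rw [← biUnion_of_singleton s, compl_iUnion₂]
  exact (countable_bInter_mem hs).2 fun a _ =>
    residual_of_dense_open isOpen_compl_singleton (dense_compl_singleton a)

theorem Set.Countable.not_isGδ_of_dense [T1Space X] [PerfectSpace X] [BaireSpace X] [Nonempty X]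
    {s : Set X} (hs : s.Countable) (hd : Dense s) : ¬IsGδ s := by
  intro hG
  have hempty : ∅ ∈ residual X := by
    simpa using inter_mem (residual_of_dense_Gδ hG hd) hs.compl_mem_residual
  exact not_nonempty_empty (dense_of_mem_residual hempty).nonempty

end Perfect

namespace LambdaPrime

variable {Z : Type*} [TopologicalSpace Z] {X Y : Set Z}

theorem mono (hYX : Y ⊆ X) (hX : LambdaPrime X) : LambdaPrime Y := by
  intro A hA
  obtain ⟨G, hG, hXG⟩ := hX A hA
  refine ⟨G, hG, subset_antisymm ?_ fun a ha => ⟨Or.inr ha, (hXG.symm.subset ha).2⟩⟩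
  rintro z ⟨hz, hzG⟩
  exact hXG.subset ⟨union_subset_union_left A hYX hz, hzG⟩

theorem isGδ_of_countable (hX : LambdaPrime X) {s : Set X} (hs : s.Countable) : IsGδ s := by
  obtain ⟨G, hG, hXG⟩ := hX _ (hs.image Subtype.val)
  have hsG : s = Subtype.val ⁻¹' G := by
    rw [← Subtype.val_injective.preimage_image s, ← hXG,
      union_eq_self_of_subset_right (image_subset_range _ _ |>.trans Subtype.range_val.subset),
      Subtype.preimage_coe_self_inter]
  exact hsG ▸ hG.preimage continuous_subtype_val

theorem totallyImperfect [PolishSpace Z] (hX : LambdaPrime X) : TotallyImperfect X := by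
  intro P hPX hP
  by_contra hne
  have : Nonempty P := (nonempty_iff_ne_empty.2 hne).to_subtype
  have := hP.closed.polishSpace
  have := hP.acc.perfectSpace_subtype
  obtain ⟨s, hs, hsd⟩ := TopologicalSpace.exists_countable_dense P
  exact hs.not_isGδ_of_dense hsd ((hX.mono hPX).isGδ_of_countable hs)

end LambdaPrime

theorem stmt8_general (X : Set (Cantor × Cantor))
    (hlam : LambdaPrime X) :
    TotallyImperfect X :=
  have : PolishSpace (Cantor × Cantor) := {}
  hlam.totallyImperfect

theorem stmt8 (X : Set (Cantor × Cantor))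
    (hlam : LambdaPrime X) (hH : Hurewicz X) :
    TotallyImperfect X :=
  stmt8_general X hlam
end

section
/- If X ⊆ 2^ω is a set admitting a continuous map f : X → 2^ω whose image f[X] is not meager in 2^ω, then there is a homeomorphic copy Z of X in 2^ω which is not everywhere meager; that is, there is an infinite set b ⊆ ω such that Z_b := {z↾b : z ∈ Z} is not meager in 2^b. -/
open Set Filter Topology MeasureTheory

/-!
Send `x ∈ X` to the sequence carrying `x` on the even and `f x` on the odd coordinates. This is the
graph of the continuous map `f` followed by the homeomorphism `2^ω × 2^ω ≃ 2^ω`, so it embeds `X`,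
and reading its image on the odd coordinates `b` returns, up to the homeomorphism `2^b ≃ 2^ω`, the
non-meager set `f[X]`.
-/

namespace Homeomorph

variable {X Y : Type*} [TopologicalSpace X] [TopologicalSpace Y]

lemma isMeagre_image_iff (H : X ≃ₜ Y) {s : Set X} : IsMeagre (H '' s) ↔ IsMeagre s := by
  refine ⟨fun h => ?_, H.isInducing.isMeagre_image⟩
  simpa only [← H.coe_toEquiv, ← H.coe_symm_toEquiv, Equiv.symm_image_image] using
    H.symm.isInducing.isMeagre_image h

variable {α : Type*} [TopologicalSpace α]

/-- The first factor fills the even coordinates, the second the odd ones. -/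
def natInterleave : (ℕ → α) × (ℕ → α) ≃ₜ (ℕ → α) :=
  sumArrowHomeomorphProdArrow.symm.trans (piCongrLeft (Y := fun _ => α) Equiv.natSumNatEquivNat)

lemma natInterleave_comp_two_mul_add_one (p : (ℕ → α) × (ℕ → α)) :
    natInterleave p ∘ (2 * · + 1) = p.2 := by
  funext n
  exact piCongrLeft_apply_apply (Y := fun _ => α) Equiv.natSumNatEquivNat _ (Sum.inr n)

end Homeomorph

lemma isMeagre_restrict_range_image_iff {α ι : Type*} [TopologicalSpace α] {e : ℕ → ι}
    (he : Function.Injective e) (Z : Set (ι → α)) :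
    IsMeagre ((fun z (i : range e) => z i) '' Z) ↔ IsMeagre ((· ∘ e) '' Z) := by
  let H := Homeomorph.piCongrLeft (Y := fun _ : range e => α) (Equiv.ofInjective e he)
  have hcomp : (· ∘ e) '' Z = H.symm '' ((fun z (i : range e) => z i) '' Z) := by
    rw [image_image]; rfl
  rw [hcomp, H.symm.isMeagre_image_iff]

theorem stmt9 (X : Set Cantor) (f : X → Cantor)
    (hf : Continuous f) (hmeager : ¬ IsMeagre (Set.range f)) :
    ∃ Z : Set Cantor, Nonempty (X ≃ₜ Z) ∧
      ∃ b : Set ℕ, b.Infinite ∧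
        ¬ IsMeagre ((fun z : Cantor => fun i : b => z i) '' Z : Set (b → Bool)) := by
  set g : X → Cantor := fun x => Homeomorph.natInterleave (x.1, f x)
  have hg : IsEmbedding g := Homeomorph.natInterleave.isEmbedding.comp <|
    (IsEmbedding.subtypeVal.prodMap .id).comp (isEmbedding_graph hf)
  have hodd : Function.Injective (2 * · + 1 : ℕ → ℕ) := fun m n h => by simpa using h
  have hproj : (· ∘ (2 * · + 1)) '' range g = range f := by
    rw [← range_comp]
    exact congrArg range (funext fun x => Homeomorph.natInterleave_comp_two_mul_add_one (x.1, f x))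
  refine ⟨range g, ⟨hg.toHomeomorph⟩, range (2 * · + 1), infinite_range_of_injective hodd, ?_⟩
  rwa [isMeagre_restrict_range_image_iff hodd, hproj]
end

section
/- Let X ⊆ 2^ω × 2^ω be a Menger set and let (U_n)_{n∈ω} be a sequence of covers of X by sets open in 2^ω × 2^ω such that the set ⋂_n ⋃U_n has all vertical sections dense in 2^ω. Then there are finite sets F_n ⊆ U_n such that ⋃_n F_n covers X and the set ⋃_n ⋃F_n has all vertical sections dense in 2^ω. -/
open Set Filter Topology MeasureTheory

/-!
Menger's property of `X` takes care of covering `X`; density of the sections is handled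
separately, one basic open set `V` of a countable base at each stage `n`. Since the sections of
`⋃₀ U n` are dense, every `x` has some `y ∈ V` with `(x, y) ∈ u_x ∈ U n`, and then a whole
neighbourhood of `x` times `{y}` lies in `u_x`; compactness of the first factor leaves finitely
many `u_x` whose union still has every section meeting `V`.
-/

theorem exists_finite_subset_forall_exists_mem_sUnion
    {X Y : Type*} [TopologicalSpace X] [CompactSpace X] [TopologicalSpace Y]
    {U : Set (Set (X × Y))} (hU : ∀ u ∈ U, IsOpen u) {V : Set Y}
    (hV : ∀ x, ∃ y ∈ V, (x, y) ∈ ⋃₀ U) :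
    ∃ G ⊆ U, G.Finite ∧ ∀ x, ∃ y ∈ V, (x, y) ∈ ⋃₀ G := by
  choose y hyV hyU using hV
  choose u huU hxu using fun x => mem_sUnion.1 (hyU x)
  let A : X → Set X := fun x => (fun x' => (x', y x)) ⁻¹' u x
  have hA : ∀ x, IsOpen (A x) := fun x =>
    (hU _ (huU x)).preimage (continuous_id.prodMk continuous_const)
  obtain ⟨t, ht⟩ := isCompact_univ.elim_finite_subcover A hA
    fun x _ => mem_iUnion.2 ⟨x, hxu x⟩
  refine ⟨u '' t, image_subset_iff.2 fun x _ => huU x, t.finite_toSet.image u, fun x' => ?_⟩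
  obtain ⟨x, hxt, hx'⟩ := mem_iUnion₂.1 (ht (mem_univ x'))
  exact ⟨y x, hyV x, u x, mem_image_of_mem u hxt, hx'⟩

theorem exists_finite_subsets_dense_sections
    {X Y : Type*} [TopologicalSpace X] [CompactSpace X] [TopologicalSpace Y]
    [SecondCountableTopology Y]
    {U : ℕ → Set (Set (X × Y))} (hU : ∀ n, ∀ u ∈ U n, IsOpen u)
    (hdense : ∀ n x, Dense {y | (x, y) ∈ ⋃₀ U n}) :
    ∃ G : ℕ → Set (Set (X × Y)), (∀ n, G n ⊆ U n ∧ (G n).Finite) ∧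
      ∀ x, Dense {y | (x, y) ∈ ⋃ n, ⋃₀ G n} := by
  obtain ⟨B, hBc, hBne, hB⟩ := TopologicalSpace.exists_countable_basis Y
  obtain ⟨V, hBV⟩ := countable_iff_exists_subset_range.1 hBc
  have hstage : ∀ n, ∃ G ⊆ U n, G.Finite ∧ (V n ∈ B → ∀ x, ∃ y ∈ V n, (x, y) ∈ ⋃₀ G) := by
    intro n
    by_cases hn : V n ∈ B
    · have hVne : (V n).Nonempty := nonempty_iff_ne_empty.2 (ne_of_mem_of_not_mem hn hBne)
      obtain ⟨G, hGU, hGf, hG⟩ := exists_finite_subset_forall_exists_mem_sUnion (hU n)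
        fun x => (hdense n x).inter_open_nonempty _ (hB.isOpen hn) hVne
      exact ⟨G, hGU, hGf, fun _ => hG⟩
    · exact ⟨∅, empty_subset _, finite_empty, fun h => absurd h hn⟩
  choose G hGU hGf hG using hstage
  refine ⟨G, fun n => ⟨hGU n, hGf n⟩, fun x => hB.dense_iff.2 fun o ho _ => ?_⟩
  obtain ⟨n, rfl⟩ := hBV ho
  obtain ⟨y, hyo, hy⟩ := hG n ho x
  exact ⟨y, hyo, mem_iUnion.2 ⟨n, hy⟩⟩

theorem stmt10 (X : Set (Cantor × Cantor)) (hX : Menger X)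
    (U : ℕ → Set (Set (Cantor × Cantor)))
    (hopen : ∀ n, ∀ u ∈ U n, IsOpen u)
    (hcover : ∀ n, X ⊆ ⋃₀ U n)
    (hdense : ∀ x : Cantor, Dense (sect (⋂ n, ⋃₀ U n) x)) :
    ∃ F : ℕ → Set (Set (Cantor × Cantor)),
      (∀ n, F n ⊆ U n ∧ (F n).Finite) ∧
      X ⊆ ⋃ n, ⋃₀ F n ∧
      ∀ x : Cantor, Dense (sect (⋃ n, ⋃₀ F n) x) := by
  obtain ⟨F, hF, hXF⟩ := hX U fun n => ⟨hopen n, hcover n⟩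
  obtain ⟨G, hG, hGdense⟩ := exists_finite_subsets_dense_sections hopen
    fun n x => (hdense x).mono fun _ hy => by exact mem_iInter.1 hy n
  refine ⟨fun n => F n ∪ G n, fun n => ⟨union_subset (hF n).1 (hG n).1, (hF n).2.union (hG n).2⟩,
    hXF.trans ?_, fun x => (hGdense x).mono ?_⟩
  · exact iUnion_mono fun n => sUnion_mono subset_union_left
  · exact fun _ hy => iUnion_mono (fun n => sUnion_mono subset_union_right) hy
end

section
/- If X is a subset of a compact metrizable space K such that for every G_δ set G ⊆ K containing X there is an F_σ set F with X ⊆ F ⊆ G, and Y ⊆ X is an F_σ subset of X, then Y has the same property: for every G_δ set G' ⊆ K containing Y there is an F_σ set F' with Y ⊆ F' ⊆ G'. -/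
open Set Filter Topology MeasureTheory

def HasFSigmaInterpolation {Z : Type*} [TopologicalSpace Z] (X : Set Z) : Prop :=
  ∀ G : Set Z, IsGδ G → X ⊆ G → ∃ F : Set Z, IsFSigma F ∧ X ⊆ F ∧ F ⊆ G

section

variable {Z : Type*} [TopologicalSpace Z]

theorem isFSigma_iff_isGδ_compl {s : Set Z} : IsFSigma s ↔ IsGδ sᶜ := by
  rw [isGδ_iff_eq_iInter_nat]
  constructor
  · rintro ⟨f, hf, rfl⟩
    exact ⟨fun n => (f n)ᶜ, fun n => (hf n).isOpen_compl, compl_iUnion f⟩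
  · rintro ⟨g, hg, h⟩
    refine ⟨fun n => (g n)ᶜ, fun n => (hg n).isClosed_compl, ?_⟩
    rw [← compl_iInter, ← h, compl_compl]

theorem IsFSigma.inter {s t : Set Z} (hs : IsFSigma s) (ht : IsFSigma t) : IsFSigma (s ∩ t) := by
  rw [isFSigma_iff_isGδ_compl, compl_inter] at *
  exact hs.union ht

theorem HasFSigmaInterpolation.inter_of_isFSigma {X F : Set Z} (hX : HasFSigmaInterpolation X)
    (hF : IsFSigma F) : HasFSigmaInterpolation (X ∩ F) := by
  intro G hG hXFG
  have hXG : X ⊆ G ∪ Fᶜ := fun x hx => (em (x ∈ F)).imp (fun h => hXFG ⟨hx, h⟩) id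
  obtain ⟨F₀, hF₀, hXF₀, hF₀G⟩ := hX (G ∪ Fᶜ) (hG.union (isFSigma_iff_isGδ_compl.1 hF)) hXG
  exact ⟨F₀ ∩ F, hF₀.inter hF, inter_subset_inter_left F hXF₀,
    fun x ⟨hx₀, hx⟩ => (hF₀G hx₀).resolve_right (not_not_intro hx)⟩

end

theorem stmt16_general {K : Type*} [TopologicalSpace K]
    (X Y : Set K)
    (hX : ∀ G : Set K, IsGδ G → X ⊆ G → ∃ F : Set K, IsFSigma F ∧ X ⊆ F ∧ F ⊆ G)
    (hY : ∃ F : Set K, IsFSigma F ∧ Y = X ∩ F) :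
    ∀ G' : Set K, IsGδ G' → Y ⊆ G' →
      ∃ F' : Set K, IsFSigma F' ∧ Y ⊆ F' ∧ F' ⊆ G' := by
  obtain ⟨F, hF, rfl⟩ := hY
  exact HasFSigmaInterpolation.inter_of_isFSigma hX hF

theorem stmt16 {K : Type*} [TopologicalSpace K] [CompactSpace K]
    [TopologicalSpace.MetrizableSpace K]
    (X Y : Set K)
    (hX : ∀ G : Set K, IsGδ G → X ⊆ G → ∃ F : Set K, IsFSigma F ∧ X ⊆ F ∧ F ⊆ G)
    (hYX : Y ⊆ X) (hY : ∃ F : Set K, IsFSigma F ∧ Y = X ∩ F) :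
    ∀ G' : Set K, IsGδ G' → Y ⊆ G' →
      ∃ F' : Set K, IsFSigma F' ∧ Y ⊆ F' ∧ F' ⊆ G' :=
  stmt16_general X Y hX hY
end
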